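/- arXiv:1509.00239 — 6 statements merged into one kernel-verified Lean document; each statement's English description precedes it below -/
import Mathlib

section
/- Let N be a natural number and π : {1,…,N} → ℝ with Σ_{i=1}^N π i = 1. Define Cost(B) = k·Σ_{i=1}^B i·π i + k·B·Σ_{i=B+1}^N π i for B ∈ {0,…,N} and real k. Suppose B₀ and c are natural numbers with B₀ + c ≤ N and there is a real ρ with π i = ρ for all i with B₀ < i ≤ B₀ + c. Let s' = Σ_{i=1}^{B₀+c} π i. Then Cost(B₀ + c) − Cost(B₀) = k·( c·(1 − s') + ρ·(c² + c)/2 ). -/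
/-! Since `∑ π = 1`, the tail sum is `1 - s_B`, so `Cost B = k·(∑_{i ≤ B} i·π i + B·(1 - s_B))`
for `B ≤ N`. Passing from `B₀` to `B₀ + c` adds `ρ·(c·B₀ + (c² + c)/2)` to the moment sum and
`c·ρ` to `s`; the term `B₀·c·ρ` appears in both and cancels. -/

open Finset

theorem sum_Icc_one_sub_sum_Icc_one {M : Type*} [AddCommGroup M] (f : ℕ → M) {m n : ℕ}
    (hmn : m ≤ n) :
    ∑ i ∈ Icc 1 n, f i - ∑ i ∈ Icc 1 m, f i = ∑ i ∈ Ioc m n, f i := by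
  have hIcc_one (n : ℕ) : Icc 1 n = Ioc 0 n := Icc_add_one_left_eq_Ioc 0 n
  rw [sub_eq_iff_eq_add', hIcc_one, hIcc_one, sum_Ioc_consecutive f (Nat.zero_le m) hmn]

theorem sum_Ioc_add_natCast {K : Type*} [Field K] [CharZero K] (a c : ℕ) :
    ∑ i ∈ Ioc a (a + c), (i : K) = c * a + ((c : K) ^ 2 + c) / 2 := by
  induction c with
  | zero => simp
  | succ c ih =>
    rw [← add_assoc, sum_Ioc_succ_top (by omega), ih]
    push_cast
    field_simp
    ring

theorem sum_Ioc_add_of_eq_const {R : Type*} [NonAssocSemiring R] {π : ℕ → R} {ρ : R} {a c : ℕ}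
    (hρ : ∀ i ∈ Ioc a (a + c), π i = ρ) :
    ∑ i ∈ Ioc a (a + c), π i = c * ρ := by
  rw [sum_congr rfl hρ, sum_const, Nat.card_Ioc, Nat.add_sub_cancel_left, nsmul_eq_mul]

theorem sum_Ioc_add_natCast_mul_of_eq_const {K : Type*} [Field K] [CharZero K] {π : ℕ → K}
    {ρ : K} {a c : ℕ} (hρ : ∀ i ∈ Ioc a (a + c), π i = ρ) :
    ∑ i ∈ Ioc a (a + c), (i : K) * π i = ρ * (c * a + ((c : K) ^ 2 + c) / 2) := by
  rw [sum_congr rfl fun i hi => congrArg _ (hρ i hi), ← sum_mul, sum_Ioc_add_natCast, mul_comm]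

/-- Correctness of the cost-update rule of the best-response algorithm: with
`Cost B = k·∑_{i=1}^B i·π i + k·B·∑_{i=B+1}^N π i`, if the block of `c` indices
`B₀ < i ≤ B₀ + c` all have probability `ρ` and `s' = ∑_{i=1}^{B₀+c} π i`, then
`Cost (B₀+c) − Cost B₀ = k·(c·(1 − s') + ρ·(c² + c)/2)`. -/
theorem cost_update_rule (N : ℕ) (π : ℕ → ℝ) (k : ℝ)
    (hsum : ∑ i ∈ Finset.Icc 1 N, π i = 1)
    (Cost : ℕ → ℝ)
    (hCost : ∀ B : ℕ, Cost B =
      k * ∑ i ∈ Finset.Icc 1 B, (i : ℝ) * π i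
        + k * (B : ℝ) * ∑ i ∈ Finset.Icc (B + 1) N, π i)
    (B₀ c : ℕ) (hBc : B₀ + c ≤ N) (ρ : ℝ)
    (hρ : ∀ i : ℕ, B₀ < i → i ≤ B₀ + c → π i = ρ) :
    Cost (B₀ + c) - Cost B₀ =
      k * ((c : ℝ) * (1 - ∑ i ∈ Finset.Icc 1 (B₀ + c), π i)
        + ρ * ((c : ℝ) ^ 2 + (c : ℝ)) / 2) := by
  have hblock : ∀ i ∈ Ioc B₀ (B₀ + c), π i = ρ := fun i hi =>
    hρ i (mem_Ioc.1 hi).1 (mem_Ioc.1 hi).2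
  have htail : ∀ B ≤ N, ∑ i ∈ Icc (B + 1) N, π i = 1 - ∑ i ∈ Icc 1 B, π i := fun B hB => by
    rw [← hsum, sum_Icc_one_sub_sum_Icc_one π hB, Icc_add_one_left_eq_Ioc]
  have hmass := sum_Icc_one_sub_sum_Icc_one π (Nat.le_add_right B₀ c)
  have hmoment := sum_Icc_one_sub_sum_Icc_one (fun i => (i : ℝ) * π i) (Nat.le_add_right B₀ c)
  rw [sum_Ioc_add_of_eq_const hblock] at hmass
  rw [sum_Ioc_add_natCast_mul_of_eq_const hblock] at hmoment
  rw [hCost, hCost, htail _ hBc, htail _ (by omega)]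
  push_cast
  linear_combination k * hmoment - k * B₀ * hmass
end

section
/- Let m, n, b be natural numbers with n ≥ 1 and 0 ≤ b ≤ n·m, and let q_1 ≥ q_2 ≥ … ≥ q_m ≥ 0 be a non-increasing sequence of nonnegative reals. Then for every function c : Fin n → ℕ with c u ≤ m for all u and Σ_u c u = b, one has Σ_{u} Σ_{j=1}^{c u} q j ≤ (b mod n)·q_{⌊b/n⌋+1} + n·Σ_{j=1}^{⌊b/n⌋} q j, where the first term is interpreted as 0 when b mod n = 0 (note ⌊b/n⌋ + 1 ≤ m whenever b mod n ≠ 0). That is, distributing the b guesses as evenly as possible among the n equally likely passwords maximizes the total probability covered. -/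
/-- Abel-summation comparison: if `q` is non-increasing and nonnegative on
`[1, m]` and the prefix sums of `a` are dominated by those of `d`, then the
`q`-weighted sum of `a` is at most that of `d`. -/
lemma abel_weighted_le (m : ℕ) (q a d : ℕ → ℝ)
    (hmono : ∀ j j' : ℕ, 1 ≤ j → j ≤ j' → j' ≤ m → q j' ≤ q j)
    (hnonneg : ∀ j : ℕ, 1 ≤ j → j ≤ m → 0 ≤ q j)
    (hAD : ∀ k, 1 ≤ k → k ≤ m →
      ∑ j ∈ Finset.Icc 1 k, a j ≤ ∑ j ∈ Finset.Icc 1 k, d j) :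
    ∑ j ∈ Finset.Icc 1 m, a j * q j ≤ ∑ j ∈ Finset.Icc 1 m, d j * q j := by
  induction m generalizing q with
  | zero => simp
  | succ m ih =>
    have key : ∀ f : ℕ → ℝ,
        ∑ j ∈ Finset.Icc 1 (m + 1), f j * q j
          = ∑ j ∈ Finset.Icc 1 m, f j * (q j - q (m + 1))
            + q (m + 1) * ∑ j ∈ Finset.Icc 1 (m + 1), f j := by
      intro f
      rw [Finset.sum_Icc_succ_top (by omega : 1 ≤ m + 1),
        Finset.sum_Icc_succ_top (by omega : 1 ≤ m + 1) f]
      simp only [mul_sub, Finset.sum_sub_distrib, Finset.mul_sum, mul_add]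
      rw [Finset.sum_congr rfl
        (fun j (_ : j ∈ Finset.Icc 1 m) => mul_comm (q (m + 1)) (f j))]
      ring
    rw [key a, key d]
    apply add_le_add
    · refine ih (fun j => q j - q (m + 1)) ?_ ?_ ?_
      · intro j j' h1 h2 h3
        have := hmono j j' h1 h2 (by omega)
        simpa using this
      · intro j h1 h2
        have := hmono j (m + 1) h1 (by omega) (le_refl _)
        simpa using this
      · intro k h1 h2
        exact hAD k h1 (by omega)
    · exact mul_le_mul_of_nonneg_left (hAD (m + 1) (by omega) (le_refl _))
        (hnonneg (m + 1) (by omega) (le_refl _))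

/-- Distributing `b` guesses as evenly as possible among `n` equally likely
passwords maximizes the covered salt-probability mass: for any allocation
`c : Fin n → ℕ` with `c u ≤ m` and `∑ u, c u = b ≤ n·m`, and a non-increasing
nonnegative salt distribution `q` (indexed `1,…,m`),
`∑_u ∑_{j=1}^{c u} q j ≤ (b mod n)·q (⌊b/n⌋+1) + n·∑_{j=1}^{⌊b/n⌋} q j`. -/
theorem even_allocation_optimal (m n b : ℕ) (hn : 1 ≤ n) (hb : b ≤ n * m)
    (q : ℕ → ℝ)
    (hmono : ∀ j j' : ℕ, 1 ≤ j → j ≤ j' → j' ≤ m → q j' ≤ q j)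
    (hnonneg : ∀ j : ℕ, 1 ≤ j → j ≤ m → 0 ≤ q j)
    (c : Fin n → ℕ) (hc : ∀ u, c u ≤ m) (hcsum : ∑ u, c u = b) :
    ∑ u : Fin n, ∑ j ∈ Finset.Icc 1 (c u), q j ≤
      ((b % n : ℕ) : ℝ) * q (b / n + 1)
        + (n : ℝ) * ∑ j ∈ Finset.Icc 1 (b / n), q j := by
  set t := b / n with ht
  have hmod : n * t + b % n = b := Nat.div_add_mod b n
  have hrn : b % n < n := Nat.mod_lt _ (by omega)
  have htm : t ≤ m := by
    calc t ≤ (n * m) / n := Nat.div_le_div_right hb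
    _ = m := Nat.mul_div_cancel_left m (by omega)
  have htm' : b % n ≠ 0 → t + 1 ≤ m := by
    intro hr
    by_contra hcon
    have hm : m ≤ t := by omega
    have : n * m ≤ n * t := Nat.mul_le_mul_left n hm
    omega
  -- the allocation counts
  set a : ℕ → ℕ := fun j => (Finset.univ.filter fun u : Fin n => j ≤ c u).card with ha
  set d : ℕ → ℕ := fun j => if j ≤ t then n else if j = t + 1 then b % n else 0 with hd
  have hd_le : ∀ j, j ≤ t → d j = n := by
    intro j hj; simp [hd, hj]
  have hd_eq : d (t + 1) = b % n := by
    have h1 : ¬ (t + 1 ≤ t) := by omega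
    simp [hd, h1]
  have hd_zero : ∀ j, t < j → j ≠ t + 1 → d j = 0 := by
    intro j h1 h2
    simp only [hd]
    rw [if_neg (by omega), if_neg h2]
  -- LHS rewrite
  have hL : ∑ u : Fin n, ∑ j ∈ Finset.Icc 1 (c u), q j
      = ∑ j ∈ Finset.Icc 1 m, (a j : ℝ) * q j := by
    have h1 : ∀ u : Fin n,
        Finset.Icc 1 (c u) = (Finset.Icc 1 m).filter (fun j => j ≤ c u) := by
      intro u
      ext j
      have := hc u
      simp only [Finset.mem_filter, Finset.mem_Icc]
      omega
    calc ∑ u : Fin n, ∑ j ∈ Finset.Icc 1 (c u), q j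
        = ∑ u : Fin n, ∑ j ∈ Finset.Icc 1 m, if j ≤ c u then q j else 0 := by
          refine Finset.sum_congr rfl fun u _ => ?_
          rw [h1 u, Finset.sum_filter]
      _ = ∑ j ∈ Finset.Icc 1 m, ∑ u : Fin n, if j ≤ c u then q j else 0 :=
          Finset.sum_comm
      _ = ∑ j ∈ Finset.Icc 1 m, (a j : ℝ) * q j := by
          refine Finset.sum_congr rfl fun j _ => ?_
          rw [← Finset.sum_filter, Finset.sum_const, nsmul_eq_mul]
  -- RHS rewrite
  have hIcc : ∀ k : ℕ, Finset.Icc 1 k = Finset.Ioc 0 k := fun k => by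
    ext j; simp [Finset.mem_Icc, Finset.mem_Ioc]; omega
  have hR : ∑ j ∈ Finset.Icc 1 m, (d j : ℝ) * q j
      = ((b % n : ℕ) : ℝ) * q (t + 1) + (n : ℝ) * ∑ j ∈ Finset.Icc 1 t, q j := by
    have hsplit : ∑ j ∈ Finset.Icc 1 m, (d j : ℝ) * q j
        = ∑ j ∈ Finset.Icc 1 t, (d j : ℝ) * q j
          + ∑ j ∈ Finset.Ioc t m, (d j : ℝ) * q j := by
      rw [hIcc m, hIcc t, Finset.sum_Ioc_consecutive _ (Nat.zero_le t) htm]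
    have h1 : ∑ j ∈ Finset.Icc 1 t, (d j : ℝ) * q j
        = (n : ℝ) * ∑ j ∈ Finset.Icc 1 t, q j := by
      rw [Finset.mul_sum]
      refine Finset.sum_congr rfl fun j hj => ?_
      have hj' := Finset.mem_Icc.mp hj
      rw [hd_le j hj'.2]
    have h2 : ∑ j ∈ Finset.Ioc t m, (d j : ℝ) * q j
        = ((b % n : ℕ) : ℝ) * q (t + 1) := by
      by_cases hr : b % n = 0
      · rw [hr]
        simp only [Nat.cast_zero, zero_mul]
        refine Finset.sum_eq_zero fun j hj => ?_
        have hj' := Finset.mem_Ioc.mp hj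
        by_cases hje : j = t + 1
        · subst hje; rw [hd_eq, hr]; simp
        · rw [hd_zero j hj'.1 hje]; simp
      · refine Finset.sum_eq_single_of_mem (t + 1)
          (Finset.mem_Ioc.mpr ⟨by omega, htm' hr⟩) ?_ |>.trans ?_
        · intro j hj hne
          have hj' := Finset.mem_Ioc.mp hj
          rw [hd_zero j hj'.1 hne]; simp
        · rw [hd_eq]
    rw [hsplit, h1, h2]; ring
  -- prefix sums, nat versions
  have hAnat : ∀ k, ∑ j ∈ Finset.Icc 1 k, a j = ∑ u : Fin n, min (c u) k := by
    intro k
    calc ∑ j ∈ Finset.Icc 1 k, a j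
        = ∑ j ∈ Finset.Icc 1 k, ∑ u : Fin n, if j ≤ c u then 1 else 0 := by
          refine Finset.sum_congr rfl fun j _ => ?_
          simp only [ha]
          exact Finset.card_filter _ _
      _ = ∑ u : Fin n, ∑ j ∈ Finset.Icc 1 k, if j ≤ c u then 1 else 0 :=
          Finset.sum_comm
      _ = ∑ u : Fin n, min (c u) k := by
          refine Finset.sum_congr rfl fun u _ => ?_
          have hf : (Finset.Icc 1 k).filter (fun j => j ≤ c u)
              = Finset.Icc 1 (min (c u) k) := by
            ext j
            simp only [Finset.mem_filter, Finset.mem_Icc]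
            omega
          rw [← Finset.sum_filter, hf, Finset.sum_const, Nat.card_Icc]
          simp
  have hAle1 : ∀ k, ∑ j ∈ Finset.Icc 1 k, a j ≤ b := by
    intro k
    rw [hAnat, ← hcsum]
    exact Finset.sum_le_sum fun u _ => min_le_left _ _
  have hAle2 : ∀ k, ∑ j ∈ Finset.Icc 1 k, a j ≤ n * k := by
    intro k
    rw [hAnat]
    calc ∑ u : Fin n, min (c u) k ≤ ∑ _u : Fin n, k :=
          Finset.sum_le_sum fun u _ => min_le_right _ _
      _ = n * k := by simp [Finset.sum_const, mul_comm]
  have hD1 : ∀ k, k ≤ t → ∑ j ∈ Finset.Icc 1 k, d j = n * k := by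
    intro k hk
    have : ∀ j ∈ Finset.Icc 1 k, d j = n := by
      intro j hj
      have hj' := Finset.mem_Icc.mp hj
      exact hd_le j (by omega)
    rw [Finset.sum_congr rfl this, Finset.sum_const, Nat.card_Icc]
    simp [mul_comm]
  have hD2 : ∀ k, t < k → k ≤ m → ∑ j ∈ Finset.Icc 1 k, d j = b := by
    intro k hk1 hk2
    have hsplit : ∑ j ∈ Finset.Icc 1 k, d j
        = ∑ j ∈ Finset.Icc 1 t, d j + ∑ j ∈ Finset.Ioc t k, d j := by
      rw [hIcc k, hIcc t, Finset.sum_Ioc_consecutive _ (Nat.zero_le t) (le_of_lt hk1)]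
    have h2 : ∑ j ∈ Finset.Ioc t k, d j = b % n := by
      refine Finset.sum_eq_single_of_mem (t + 1)
        (Finset.mem_Ioc.mpr ⟨by omega, by omega⟩) ?_ |>.trans ?_
      · intro j hj hne
        have hj' := Finset.mem_Ioc.mp hj
        exact hd_zero j hj'.1 hne
      · exact hd_eq
    rw [hsplit, hD1 t le_rfl, h2, hmod]
  have hADnat : ∀ k, k ≤ m → ∑ j ∈ Finset.Icc 1 k, a j ≤ ∑ j ∈ Finset.Icc 1 k, d j := by
    intro k hk
    rcases le_or_gt k t with h | h
    · rw [hD1 k h]; exact hAle2 k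
    · rw [hD2 k h hk]; exact hAle1 k
  -- conclude
  rw [hL, ← hR]
  refine abel_weighted_le m q (fun j => (a j : ℝ)) (fun j => (d j : ℝ))
    hmono hnonneg ?_
  intro k _ hk
  have := hADnat k hk
  push_cast
  exact_mod_cast this
end

section
/- Let n, m ≥ 1 and B ≤ n·m be natural numbers and let p_1 ≥ p_2 ≥ … ≥ p_n ≥ 0 be a non-increasing sequence of nonnegative reals. Consider the multiset consisting of each value p_i/m repeated m times (i.e., the products p_i · q_j for the uniform distribution q_j = 1/m). Then the sum of the B largest elements of this multiset equals Σ_{i=1}^{⌊B/m⌋} p_i + (B mod m)·p_{⌊B/m⌋+1}/m (the last term interpreted as 0 when B mod m = 0). -/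
/-!
Index the pair `(i, j)` by `k = j + m i`. This is a bijection onto `{0, …, n m - 1}` under which
the value `p (i + 1) / m` becomes `p (k / m + 1) / m`, a non-increasing function of `k`. For a
non-increasing function, a `B`-element subset of `{0, …, N - 1}` has sum at most that of
`{0, …, B - 1}`, since its `k`-th smallest element is at least `k`. Cutting `{0, …, B - 1}`
into `⌊B/m⌋` blocks of length `m` followed by `B mod m` further indices evaluates the sum.
-/

open Finset

theorem Finset.le_orderEmbOfFin (S : Finset ℕ) (k : Fin #S) :
    (k : ℕ) ≤ S.orderEmbOfFin rfl k := by
  obtain ⟨k, hk⟩ := k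
  induction k with
  | zero => exact Nat.zero_le _
  | succ k ih =>
    exact (ih (by omega)).trans_lt
      ((S.orderEmbOfFin rfl).strictMono (Fin.mk_lt_mk.2 k.lt_succ_self))

theorem Finset.sum_le_sum_range_card_of_antitoneOn {M : Type*} [AddCommMonoid M]
    [PartialOrder M] [IsOrderedAddMonoid M] {f : ℕ → M} {N : ℕ}
    (hf : AntitoneOn f (Set.Iio N)) {S : Finset ℕ} (hS : S ⊆ range N) :
    ∑ i ∈ S, f i ≤ ∑ i ∈ range #S, f i := by
  set e := S.orderEmbOfFin rfl
  have he_lt (k : Fin #S) : e k < N := mem_range.1 (hS (S.orderEmbOfFin_mem rfl k))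
  calc ∑ i ∈ S, f i = ∑ i ∈ univ.map e.toEmbedding, f i := by
        rw [S.map_orderEmbOfFin_univ rfl]
    _ = ∑ k : Fin #S, f (e k) := sum_map _ _ _
    _ ≤ ∑ k : Fin #S, f k := sum_le_sum fun k _ =>
        hf ((S.le_orderEmbOfFin k).trans_lt (he_lt k)) (he_lt k) (S.le_orderEmbOfFin k)
    _ = ∑ i ∈ range #S, f i := Fin.sum_univ_eq_sum_range f _

theorem Finset.sum_range_mul_add_comp_div {M : Type*} [AddCommMonoid M] (g : ℕ → M)
    {m r : ℕ} (hr : r ≤ m) (q : ℕ) :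
    ∑ k ∈ range (m * q + r), g (k / m) = m • ∑ i ∈ range q, g i + r • g q := by
  have block (q : ℕ) {r : ℕ} (hr : r ≤ m) :
      ∑ x ∈ range r, g ((m * q + x) / m) = r • g q := by
    rw [sum_congr rfl (g := fun _ => g q) fun x hx => ?_, sum_const, card_range]
    rw [Nat.mul_add_div (by grind), Nat.div_eq_of_lt (by grind), add_zero]
  induction q generalizing r with
  | zero => simpa using block 0 hr
  | succ q ih =>
    rw [mul_add_one, sum_range_add, ih le_rfl, ← mul_add_one, block _ hr, sum_range_succ,
      smul_add]

theorem Finset.sum_range_div_add_one_div {K : Type*} [Field K] [CharZero K] (p : ℕ → K)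
    {m : ℕ} (hm : 0 < m) (B : ℕ) :
    ∑ k ∈ range B, p (k / m + 1) / m =
      ∑ i ∈ Icc 1 (B / m), p i + ((B % m : ℕ) : K) * p (B / m + 1) / m := by
  have hblocks := sum_range_mul_add_comp_div (fun i => p (i + 1) / m) (Nat.mod_lt B hm).le (B / m)
  rw [Nat.div_add_mod] at hblocks
  have hIcc : ∑ i ∈ Icc 1 (B / m), p i = ∑ i ∈ range (B / m), p (i + 1) := by
    rw [range_eq_Ico, sum_Ico_add', ← Ico_add_one_right_eq_Icc, zero_add]
  rw [hblocks, nsmul_eq_mul, mul_sum, nsmul_eq_mul, hIcc, mul_div_assoc]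
  congr 1
  exact sum_congr rfl fun i _ => mul_div_cancel₀ _ (Nat.cast_ne_zero.2 hm.ne')

def pairIndex (n m : ℕ) : Fin n × Fin m ↪ ℕ :=
  finProdFinEquiv.toEmbedding.trans Fin.valEmbedding

theorem pairIndex_div {n m : ℕ} (ij : Fin n × Fin m) : pairIndex n m ij / m = ij.1 := by
  have hm : 0 < m := ij.2.pos
  simp [pairIndex, Nat.add_mul_div_left _ _ hm, Nat.div_eq_of_lt ij.2.isLt]

theorem map_univ_pairIndex (n m : ℕ) : univ.map (pairIndex n m) = range (n * m) := by
  rw [pairIndex, ← map_map, map_univ_equiv, Fin.map_valEmbedding_univ, Nat.Iio_eq_range]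

theorem uniform_cash_top_B_sum_general (n m B : ℕ) (hm : 1 ≤ m)
    (hB : B ≤ n * m)
    (p : ℕ → ℝ)
    (hmono : ∀ i i' : ℕ, 1 ≤ i → i ≤ i' → i' ≤ n → p i' ≤ p i) :
    sSup {x : ℝ | ∃ S : Finset (Fin n × Fin m), S.card = B ∧
        x = ∑ ij ∈ S, p ((ij.1 : ℕ) + 1) / (m : ℝ)} =
      ∑ i ∈ Finset.Icc 1 (B / m), p i
        + ((B % m : ℕ) : ℝ) * p (B / m + 1) / (m : ℝ) := by
  set f : ℕ → ℝ := fun k => p (k / m + 1) / m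
  have hf : AntitoneOn f (Set.Iio (n * m)) := fun k _ l hl hkl =>
    div_le_div_of_nonneg_right (hmono _ _ le_add_self (by gcongr)
      ((Nat.div_lt_iff_lt_mul (by omega)).2 hl)) m.cast_nonneg
  have hsum (S : Finset (Fin n × Fin m)) :
      ∑ ij ∈ S, p ((ij.1 : ℕ) + 1) / m = ∑ k ∈ S.map (pairIndex n m), f k := by
    simp only [f, sum_map, pairIndex_div]
  have hS (S : Finset (Fin n × Fin m)) : S.map (pairIndex n m) ⊆ range (n * m) :=
    map_univ_pairIndex n m ▸ map_subset_map.2 (subset_univ S)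
  obtain ⟨S₀, -, hS₀⟩ := subset_map_iff.1 (map_univ_pairIndex n m ▸ range_subset_range.2 hB)
  rw [← sum_range_div_add_one_div p hm B]
  refine IsGreatest.csSup_eq ⟨⟨S₀, ?_, by rw [hsum, ← hS₀]⟩, ?_⟩
  · rw [← card_map (pairIndex n m), ← hS₀, card_range]
  · rintro _ ⟨S, rfl, rfl⟩
    simpa [hsum] using sum_le_sum_range_card_of_antitoneOn hf (hS S)

/-- Under uniform-CASH each product equals `p i / m` (repeated `m` times), and the
sum of the `B` largest elements of this multiset — formalized as the supremum over
size-`B` subsets of password/salt pairs of the covered mass — equals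
`∑_{i=1}^{⌊B/m⌋} p i + (B mod m)·p (⌊B/m⌋+1) / m`. -/
theorem uniform_cash_top_B_sum (n m B : ℕ) (hn : 1 ≤ n) (hm : 1 ≤ m)
    (hB : B ≤ n * m)
    (p : ℕ → ℝ)
    (hmono : ∀ i i' : ℕ, 1 ≤ i → i ≤ i' → i' ≤ n → p i' ≤ p i)
    (hnonneg : ∀ i : ℕ, 1 ≤ i → i ≤ n → 0 ≤ p i) :
    sSup {x : ℝ | ∃ S : Finset (Fin n × Fin m), S.card = B ∧
        x = ∑ ij ∈ S, p ((ij.1 : ℕ) + 1) / (m : ℝ)} =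
      ∑ i ∈ Finset.Icc 1 (B / m), p i
        + ((B % m : ℕ) : ℝ) * p (B / m + 1) / (m : ℝ) :=
  uniform_cash_top_B_sum_general n m B hm hB p hmono
end

section
/- Let m ≥ 2 be a natural number, C > 0, k = 2·C/(m+1), v = (4/3)·C + ε with 0 < ε < C/3 − 2·C/(3·(m+1)). Define π_i = 2/(3·m) for 1 ≤ i ≤ m and π_i = 1/(3·m) for m+1 ≤ i ≤ 2·m, and the adversary utility U(B) = v·Σ_{i=1}^B π_i − k·Σ_{i=1}^B i·π_i − k·B·Σ_{i=B+1}^{2m} π_i for B ∈ {0,…,2m}. Then U(B) < 0 = U(0) for every B with 1 ≤ B ≤ 2·m; hence the rational adversary's unique optimal threshold is B = 0 and the fraction of passwords cracked is 0. -/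
lemma sum_id_real (B : ℕ) : ∑ i ∈ Finset.Icc 1 B, (i:ℝ) = B*(B+1)/2 := by
  induction B with
  | zero => simp
  | succ n ih =>
    rw [Finset.sum_Icc_succ_top (by omega), ih]
    push_cast; ring

lemma sum_const_Icc (a b : ℕ) (c : ℝ) (h : a ≤ b + 1) :
    ∑ _i ∈ Finset.Icc a b, c = ((b:ℝ) + 1 - a) * c := by
  rw [Finset.sum_const, Nat.card_Icc, nsmul_eq_mul]
  congr 1
  push_cast [Nat.cast_sub h]
  ring

lemma split_sum (a b c : ℕ) (f : ℕ → ℝ) (h1 : a ≤ b + 1) (h2 : b ≤ c) :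
    ∑ i ∈ Finset.Icc a c, f i = (∑ i ∈ Finset.Icc a b, f i) + ∑ i ∈ Finset.Icc (b+1) c, f i := by
  rw [← Finset.Ico_add_one_right_eq_Icc a c, ← Finset.Ico_add_one_right_eq_Icc a b, ← Finset.Ico_add_one_right_eq_Icc (b+1) c,
    ← Finset.sum_Ico_consecutive _ (h1 : a ≤ b + 1) (by omega : b + 1 ≤ c + 1)]

lemma sum_eq_const (a b : ℕ) (f : ℕ → ℝ) (c : ℝ) (h : a ≤ b + 1)
    (hf : ∀ i, a ≤ i → i ≤ b → f i = c) :
    ∑ i ∈ Finset.Icc a b, f i = ((b:ℝ) + 1 - a) * c := by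
  rw [Finset.sum_congr rfl (fun i hi => hf i (Finset.mem_Icc.mp hi).1 (Finset.mem_Icc.mp hi).2),
    sum_const_Icc a b c h]

lemma sum_id_mul_const (a b : ℕ) (f : ℕ → ℝ) (c : ℝ) (h : a ≤ b + 1)
    (hf : ∀ i, a ≤ i → i ≤ b → f i = c) :
    ∑ i ∈ Finset.Icc a b, (i:ℝ) * f i = ((b:ℝ)*(b+1)/2 - ((a:ℝ)-1)*a/2) * c := by
  rw [Finset.sum_congr rfl (fun i hi => by
      rw [hf i (Finset.mem_Icc.mp hi).1 (Finset.mem_Icc.mp hi).2]),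
    ← Finset.sum_mul]
  congr 1
  rcases Nat.eq_zero_or_pos a with ha | ha
  · subst ha
    rw [show Finset.Icc 0 b = insert 0 (Finset.Icc 1 b) from by
        ext x; simp [Finset.mem_Icc, Finset.mem_insert]; omega,
      Finset.sum_insert (by simp), sum_id_real]
    push_cast; ring
  · have h1 : 1 ≤ a := ha
    have hsplit := split_sum 1 (a-1) b (fun i => (i:ℝ)) (by omega) (by omega)
    rw [show a - 1 + 1 = a from by omega] at hsplit
    have hA := sum_id_real (a-1)
    have hB := sum_id_real b
    have hc : ((a:ℝ) - 1) = ((a-1 : ℕ) : ℝ) := by push_cast [Nat.cast_sub h1]; ring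
    have hmain : ∑ i ∈ Finset.Icc a b, (i:ℝ)
        = (b:ℝ)*((b:ℝ)+1)/2 - ((a-1:ℕ):ℝ)*(((a-1:ℕ):ℝ)+1)/2 := by linarith
    rw [hmain, ← hc]
    ring

set_option maxHeartbeats 1600000 in
/-- Uniform-CASH deters the adversary in the paper's first example: with hidden salt
uniform on `{1,…,m}`, hash cost `k = 2C/(m+1)` and adversary value
`v = (4/3)·C + ε` where `0 < ε < C/3 − 2C/(3(m+1))`, the sorted pair-probabilities
are `π i = 2/(3m)` for `1 ≤ i ≤ m` and `π i = 1/(3m)` for `m+1 ≤ i ≤ 2m`, and the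
threshold utility `U B = v·∑_{i=1}^B π i − k·∑_{i=1}^B i·π i − k·B·∑_{i=B+1}^{2m} π i`
satisfies `U 0 = 0` and `U B < 0` for all `1 ≤ B ≤ 2m`; hence the unique optimal
threshold is `B = 0` and the fraction of cracked passwords is `0`. -/
theorem example_uniform_cash_deters (m : ℕ) (hm : 2 ≤ m) (C ε : ℝ) (hC : 0 < C)
    (hε : 0 < ε) (hε' : ε < C / 3 - 2 * C / (3 * ((m : ℝ) + 1)))
    (k v : ℝ) (hk : k = 2 * C / ((m : ℝ) + 1)) (hv : v = (4 / 3) * C + ε)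
    (π : ℕ → ℝ)
    (hπ1 : ∀ i : ℕ, 1 ≤ i → i ≤ m → π i = 2 / (3 * (m : ℝ)))
    (hπ2 : ∀ i : ℕ, m + 1 ≤ i → i ≤ 2 * m → π i = 1 / (3 * (m : ℝ)))
    (U : ℕ → ℝ)
    (hU : ∀ B : ℕ, U B =
      v * ∑ i ∈ Finset.Icc 1 B, π i
        - k * ∑ i ∈ Finset.Icc 1 B, (i : ℝ) * π i
        - k * (B : ℝ) * ∑ i ∈ Finset.Icc (B + 1) (2 * m), π i) :
    U 0 = 0 ∧ ∀ B : ℕ, 1 ≤ B → B ≤ 2 * m → U B < 0 := by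
  have hM : (2:ℝ) ≤ (m:ℝ) := by exact_mod_cast hm
  have hM0 : (0:ℝ) < (m:ℝ) := by linarith
  have hM1 : (0:ℝ) < (m:ℝ) + 1 := by linarith
  have key : 3 * ((m:ℝ)+1) * ε < C * ((m:ℝ) - 1) := by
    have h := (mul_lt_mul_of_pos_left hε' (by linarith : (0:ℝ) < 3 * ((m:ℝ)+1)))
    have heq : 3 * ((m:ℝ)+1) * (C / 3 - 2 * C / (3 * ((m:ℝ) + 1))) = C * ((m:ℝ) - 1) := by
      field_simp; ring
    linarith [heq ▸ h]
  constructor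
  · rw [hU 0]; norm_num
  · intro B hB1 hB2
    have hBn1 : (1:ℝ) ≤ (B:ℝ) := by exact_mod_cast hB1
    have hBn2 : (B:ℝ) ≤ 2 * (m:ℝ) := by exact_mod_cast hB2
    have hBpos : (0:ℝ) < (B:ℝ) := by linarith
    rw [hU B]
    by_cases hcase : B ≤ m
    · -- B ≤ m
      have hBM : (B:ℝ) ≤ (m:ℝ) := by exact_mod_cast hcase
      have S1 : ∑ i ∈ Finset.Icc 1 B, π i = (B:ℝ) * (2 / (3 * (m:ℝ))) := by
        rw [sum_eq_const 1 B π _ (by omega) (fun i h1 h2 => hπ1 i h1 (le_trans h2 hcase))]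
        ring
      have S2 : ∑ i ∈ Finset.Icc 1 B, (i:ℝ) * π i
          = ((B:ℝ)*((B:ℝ)+1)/2) * (2 / (3 * (m:ℝ))) := by
        rw [sum_id_mul_const 1 B π _ (by omega) (fun i h1 h2 => hπ1 i h1 (le_trans h2 hcase))]
        norm_num
      have S3 : ∑ i ∈ Finset.Icc (B+1) (2*m), π i
          = ((m:ℝ) - (B:ℝ)) * (2 / (3 * (m:ℝ))) + (m:ℝ) * (1 / (3 * (m:ℝ))) := by
        rw [split_sum (B+1) m (2*m) π (by omega) (by omega),
          sum_eq_const (B+1) m π _ (by omega) (fun i h1 h2 => hπ1 i (by omega) h2),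
          sum_eq_const (m+1) (2*m) π _ (by omega) (fun i h1 h2 => hπ2 i h1 h2)]
        push_cast; ring
      rw [S1, S2, S3, hk, hv]
      rw [show (4/3*C+ε) * ((B:ℝ) * (2 / (3*(m:ℝ)))) - 2*C/((m:ℝ)+1) * (((B:ℝ)*((B:ℝ)+1)/2) * (2/(3*(m:ℝ))))
          - 2*C/((m:ℝ)+1) * (B:ℝ) * (((m:ℝ) - (B:ℝ)) * (2/(3*(m:ℝ))) + (m:ℝ) * (1/(3*(m:ℝ))))
        = (2*(4/3*C+ε)*(B:ℝ)*((m:ℝ)+1) - 2*C*(B:ℝ)*((B:ℝ)+1) - 2*C*(B:ℝ)*(3*(m:ℝ) - 2*(B:ℝ)))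
            / (3*(m:ℝ)*((m:ℝ)+1)) from by
          field_simp; ring]
      apply div_neg_of_neg_of_pos
      · nlinarith [mul_lt_mul_of_pos_right key hBpos,
          mul_nonneg (mul_nonneg hC.le hBpos.le) (by linarith : (0:ℝ) ≤ (m:ℝ) - (B:ℝ)),
          mul_nonneg (mul_nonneg hC.le hBpos.le) hM0.le]
      · positivity
    · -- m < B ≤ 2m
      push_neg at hcase
      have hBM : (m:ℝ) < (B:ℝ) := by exact_mod_cast hcase
      have S1 : ∑ i ∈ Finset.Icc 1 B, π i
          = (m:ℝ) * (2 / (3 * (m:ℝ))) + ((B:ℝ) - (m:ℝ)) * (1 / (3 * (m:ℝ))) := by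
        rw [split_sum 1 m B π (by omega) (by omega),
          sum_eq_const 1 m π _ (by omega) (fun i h1 h2 => hπ1 i h1 h2),
          sum_eq_const (m+1) B π _ (by omega) (fun i h1 h2 => hπ2 i h1 (le_trans h2 hB2))]
        push_cast; ring
      have S2 : ∑ i ∈ Finset.Icc 1 B, (i:ℝ) * π i
          = ((m:ℝ)*((m:ℝ)+1)/2) * (2/(3*(m:ℝ)))
            + ((B:ℝ)*((B:ℝ)+1)/2 - (m:ℝ)*((m:ℝ)+1)/2) * (1/(3*(m:ℝ))) := by
        rw [split_sum 1 m B _ (by omega) (by omega),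
          sum_id_mul_const 1 m π _ (by omega) (fun i h1 h2 => hπ1 i h1 h2),
          sum_id_mul_const (m+1) B π _ (by omega) (fun i h1 h2 => hπ2 i h1 (le_trans h2 hB2))]
        push_cast; ring
      have S3 : ∑ i ∈ Finset.Icc (B+1) (2*m), π i = (2*(m:ℝ) - (B:ℝ)) * (1 / (3 * (m:ℝ))) := by
        rw [sum_eq_const (B+1) (2*m) π _ (by omega) (fun i h1 h2 => hπ2 i (by omega) h2)]
        push_cast; ring
      rw [S1, S2, S3, hk, hv]
      rw [show (4/3*C+ε) * ((m:ℝ) * (2/(3*(m:ℝ))) + ((B:ℝ) - (m:ℝ)) * (1/(3*(m:ℝ))))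
          - 2*C/((m:ℝ)+1) * (((m:ℝ)*((m:ℝ)+1)/2) * (2/(3*(m:ℝ)))
              + ((B:ℝ)*((B:ℝ)+1)/2 - (m:ℝ)*((m:ℝ)+1)/2) * (1/(3*(m:ℝ))))
          - 2*C/((m:ℝ)+1) * (B:ℝ) * ((2*(m:ℝ) - (B:ℝ)) * (1/(3*(m:ℝ))))
        = (2*(4/3*C+ε)*((m:ℝ)+1)*((m:ℝ)+(B:ℝ))
            - 2*C*((m:ℝ)*((m:ℝ)+1) + (B:ℝ) + 4*(m:ℝ)*(B:ℝ) - (B:ℝ)^2)) / (6*(m:ℝ)*((m:ℝ)+1)) from by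
          field_simp; ring]
      apply div_neg_of_neg_of_pos
      · nlinarith [mul_lt_mul_of_pos_right key (by linarith : (0:ℝ) < (m:ℝ) + (B:ℝ)),
          mul_nonneg (mul_nonneg hC.le (by linarith : (0:ℝ) ≤ 2*(m:ℝ) - (B:ℝ)))
            (by linarith : (0:ℝ) ≤ 3*(B:ℝ) - (m:ℝ))]
      · positivity
end

section
/- Let m ≥ 1 be a natural number, C > 0, v = (5/3)·C, k = 2·C/(m+1). Define π_i = 2/(3·m) for 1 ≤ i ≤ m and π_i = 1/(3·m) for m+1 ≤ i ≤ 2·m, and the adversary utility U(B) = v·Σ_{i=1}^B π_i − k·Σ_{i=1}^B i·π_i − k·B·Σ_{i=B+1}^{2m} π_i for B ∈ {0,…,2m}. Then U(2m) = 2·C/(3·(m+1)) > 0 and U(2m) ≥ U(B) for every B ∈ {0,…,2m}; hence B = 2m (guess until success) is a utility-maximizing threshold and the adversary cracks the password with probability Σ_{i=1}^{2m} π_i = 1. -/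
lemma cash_sum_const (π : ℕ → ℝ) (a b : ℕ) (c : ℝ)
    (h : ∀ i ∈ Finset.Ioc a b, π i = c) :
    ∑ i ∈ Finset.Ioc a b, π i = ((b - a : ℕ) : ℝ) * c := by
  rw [Finset.sum_congr rfl h, Finset.sum_const, Nat.card_Ioc, nsmul_eq_mul]

lemma cash_sum_id (a b : ℕ) (h : a ≤ b) :
    ∑ i ∈ Finset.Ioc a b, (i : ℝ) = ((b : ℝ) * (b + 1) - (a : ℝ) * ((a : ℝ) + 1)) / 2 := by
  induction b, h using Nat.le_induction with
  | base => simp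
  | succ n hn ih =>
      rw [Finset.sum_Ioc_succ_top (by omega), ih]
      push_cast; ring

lemma cash_sum_wt (π : ℕ → ℝ) (a b : ℕ) (c : ℝ) (hab : a ≤ b)
    (h : ∀ i ∈ Finset.Ioc a b, π i = c) :
    ∑ i ∈ Finset.Ioc a b, (i : ℝ) * π i
      = c * (((b : ℝ) * (b + 1) - (a : ℝ) * ((a : ℝ) + 1)) / 2) := by
  rw [Finset.sum_congr rfl (fun i hi => by rw [h i hi]),
    ← Finset.sum_mul, cash_sum_id a b hab]
  ring

/-- The paper's second example under uniform-CASH: with `v = (5/3)·C` and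
`k = 2C/(m+1)`, and sorted pair-probabilities `π i = 2/(3m)` for `1 ≤ i ≤ m`,
`π i = 1/(3m)` for `m+1 ≤ i ≤ 2m`, the threshold utility
`U B = v·∑_{i=1}^B π i − k·∑_{i=1}^B i·π i − k·B·∑_{i=B+1}^{2m} π i` satisfies
`U (2m) = 2C/(3(m+1)) > 0` and `U (2m) ≥ U B` for every `B ≤ 2m`; hence guessing
until success is optimal and the adversary cracks with probability
`∑_{i=1}^{2m} π i = 1`. -/
theorem example_uniform_cash_cracked (m : ℕ) (hm : 1 ≤ m) (C : ℝ) (hC : 0 < C)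
    (v k : ℝ) (hv : v = (5 / 3) * C) (hk : k = 2 * C / ((m : ℝ) + 1))
    (π : ℕ → ℝ)
    (hπ1 : ∀ i : ℕ, 1 ≤ i → i ≤ m → π i = 2 / (3 * (m : ℝ)))
    (hπ2 : ∀ i : ℕ, m + 1 ≤ i → i ≤ 2 * m → π i = 1 / (3 * (m : ℝ)))
    (U : ℕ → ℝ)
    (hU : ∀ B : ℕ, U B =
      v * ∑ i ∈ Finset.Icc 1 B, π i
        - k * ∑ i ∈ Finset.Icc 1 B, (i : ℝ) * π i
        - k * (B : ℝ) * ∑ i ∈ Finset.Icc (B + 1) (2 * m), π i) :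
    U (2 * m) = 2 * C / (3 * ((m : ℝ) + 1)) ∧ 0 < U (2 * m) ∧
      (∀ B : ℕ, B ≤ 2 * m → U B ≤ U (2 * m)) ∧
      ∑ i ∈ Finset.Icc 1 (2 * m), π i = 1 := by
  have hM : (1 : ℝ) ≤ (m : ℝ) := by exact_mod_cast hm
  have hM0 : (0 : ℝ) < (m : ℝ) := by linarith
  have hicc : ∀ B : ℕ, Finset.Icc 1 B = Finset.Ioc 0 B := fun B => rfl
  have hicc2 : ∀ B : ℕ, Finset.Icc (B + 1) (2 * m) = Finset.Ioc B (2 * m) := fun B => Finset.Icc_add_one_left_eq_Ioc B (2*m)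
  have hc1 : ∀ a b : ℕ, b ≤ m → (∀ i ∈ Finset.Ioc a b, π i = 2 / (3 * (m : ℝ))) := by
    intro a b hb i hi
    simp only [Finset.mem_Ioc] at hi
    exact hπ1 i (by omega) (by omega)
  have hc2 : ∀ a b : ℕ, m ≤ a → b ≤ 2 * m → (∀ i ∈ Finset.Ioc a b, π i = 1 / (3 * (m : ℝ))) := by
    intro a b ha hb i hi
    simp only [Finset.mem_Ioc] at hi
    exact hπ2 i (by omega) (by omega)
  -- closed form for the prefix sums when B ≤ m
  have hSlow : ∀ B : ℕ, B ≤ m → ∑ i ∈ Finset.Ioc 0 B, π i = ((B : ℕ) : ℝ) * (2 / (3 * (m : ℝ))) := by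
    intro B hB
    rw [cash_sum_const π 0 B _ (hc1 0 B hB)]; simp
  have hTlow : ∀ B : ℕ, B ≤ m → ∑ i ∈ Finset.Ioc 0 B, (i : ℝ) * π i
      = (2 / (3 * (m : ℝ))) * ((B : ℝ) * ((B : ℝ) + 1) / 2) := by
    intro B hB
    rw [cash_sum_wt π 0 B _ (Nat.zero_le B) (hc1 0 B hB)]
    push_cast; ring
  -- closed forms for B with m ≤ B ≤ 2m
  have hShigh : ∀ B : ℕ, m ≤ B → B ≤ 2 * m → ∑ i ∈ Finset.Ioc 0 B, π i
      = (m : ℝ) * (2 / (3 * (m : ℝ))) + ((B : ℝ) - (m : ℝ)) * (1 / (3 * (m : ℝ))) := by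
    intro B h1 h2
    rw [← Finset.sum_Ioc_consecutive π (Nat.zero_le m) h1,
      cash_sum_const π 0 m _ (hc1 0 m le_rfl),
      cash_sum_const π m B _ (hc2 m B le_rfl h2)]
    have : ((B - m : ℕ) : ℝ) = (B : ℝ) - (m : ℝ) := by
      rw [Nat.cast_sub h1]
    rw [this]; simp
  have hThigh : ∀ B : ℕ, m ≤ B → B ≤ 2 * m → ∑ i ∈ Finset.Ioc 0 B, (i : ℝ) * π i
      = (2 / (3 * (m : ℝ))) * ((m : ℝ) * ((m : ℝ) + 1) / 2)
        + (1 / (3 * (m : ℝ))) * (((B : ℝ) * ((B : ℝ) + 1) - (m : ℝ) * ((m : ℝ) + 1)) / 2) := by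
    intro B h1 h2
    rw [← Finset.sum_Ioc_consecutive _ (Nat.zero_le m) h1,
      cash_sum_wt π 0 m _ (Nat.zero_le m) (hc1 0 m le_rfl),
      cash_sum_wt π m B _ h1 (hc2 m B le_rfl h2)]
    push_cast; ring
  -- total probability is 1
  have hS1 : ∑ i ∈ Finset.Icc 1 (2 * m), π i = 1 := by
    rw [hicc, hShigh (2 * m) (by omega) le_rfl]
    push_cast
    field_simp
    ring
  -- value of U (2m)
  have hU2m : U (2 * m) = 2 * C / (3 * ((m : ℝ) + 1)) := by
    rw [hU, hicc, hicc2, hShigh (2 * m) (by omega) le_rfl,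
      hThigh (2 * m) (by omega) le_rfl, Finset.Ioc_self, Finset.sum_empty]
    rw [hv, hk]
    push_cast
    field_simp
    ring
  have hpos : 0 < U (2 * m) := by
    rw [hU2m]
    positivity
  refine ⟨hU2m, hpos, ?_, hS1⟩
  intro B hB
  rw [hU B, hicc, hicc2, hU2m]
  rcases le_or_gt B m with hBm | hBm
  · -- B ≤ m
    have htail : ∑ i ∈ Finset.Ioc B (2 * m), π i
        = ((m : ℝ) - (B : ℝ)) * (2 / (3 * (m : ℝ))) + (m : ℝ) * (1 / (3 * (m : ℝ))) := by
      rw [← Finset.sum_Ioc_consecutive π hBm (by omega),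
        cash_sum_const π B m _ (hc1 B m le_rfl),
        cash_sum_const π m (2 * m) _ (hc2 m (2 * m) le_rfl le_rfl)]
      rw [Nat.cast_sub hBm, show 2 * m - m = m by omega]
    rw [hSlow B hBm, hTlow B hBm, htail, hv, hk]
    have hb0 : (0 : ℝ) ≤ (B : ℝ) := Nat.cast_nonneg B
    have hbm : (B : ℝ) ≤ (m : ℝ) := by exact_mod_cast hBm
    have hP : (0:ℝ) ≤ C * (6 * (m:ℝ) + 8 * (B:ℝ) * (m:ℝ) - 6 * (B:ℝ)^2 - 4 * (B:ℝ))
        / (9 * (m:ℝ) * ((m:ℝ) + 1)) := by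
      apply div_nonneg _ (by positivity)
      apply mul_nonneg hC.le
      nlinarith [mul_nonneg (sub_nonneg.2 hbm) hb0, mul_nonneg hb0 hM0.le]
    have heq : 2 * C / (3 * ((m : ℝ) + 1))
        - (5 / 3 * C * ((B:ℝ) * (2 / (3 * (m:ℝ))))
          - 2 * C / ((m:ℝ) + 1) * (2 / (3 * (m:ℝ)) * ((B:ℝ) * ((B:ℝ) + 1) / 2))
          - 2 * C / ((m:ℝ) + 1) * (B:ℝ)
              * (((m:ℝ) - (B:ℝ)) * (2 / (3 * (m:ℝ))) + (m:ℝ) * (1 / (3 * (m:ℝ)))))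
        = C * (6 * (m:ℝ) + 8 * (B:ℝ) * (m:ℝ) - 6 * (B:ℝ)^2 - 4 * (B:ℝ))
          / (9 * (m:ℝ) * ((m:ℝ) + 1)) := by
      field_simp
      ring
    linarith [heq, hP]
  · -- m < B ≤ 2m
    have hmB : m ≤ B := le_of_lt hBm
    have htail : ∑ i ∈ Finset.Ioc B (2 * m), π i
        = (2 * (m : ℝ) - (B : ℝ)) * (1 / (3 * (m : ℝ))) := by
      rw [cash_sum_const π B (2 * m) _ (hc2 B (2 * m) hmB le_rfl),
        Nat.cast_sub hB]
      push_cast; ring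
    rw [hShigh B hmB hB, hThigh B hmB hB, htail, hv, hk]
    have hbm : (m : ℝ) ≤ (B : ℝ) := by exact_mod_cast hmB
    have hb2m : (B : ℝ) ≤ 2 * (m : ℝ) := by exact_mod_cast hB
    have hP : (0:ℝ) ≤ C * ((2 * (m:ℝ) - (B:ℝ)) * (3 * (B:ℝ) - (m:ℝ) + 2))
        / (9 * (m:ℝ) * ((m:ℝ) + 1)) := by
      apply div_nonneg _ (by positivity)
      apply mul_nonneg hC.le
      apply mul_nonneg (by linarith) (by linarith)
    have heq : 2 * C / (3 * ((m : ℝ) + 1))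
        - (5 / 3 * C * ((m:ℝ) * (2 / (3 * (m:ℝ))) + ((B:ℝ) - (m:ℝ)) * (1 / (3 * (m:ℝ))))
          - 2 * C / ((m:ℝ) + 1) * (2 / (3 * (m:ℝ)) * ((m:ℝ) * ((m:ℝ) + 1) / 2)
              + 1 / (3 * (m:ℝ)) * (((B:ℝ) * ((B:ℝ) + 1) - (m:ℝ) * ((m:ℝ) + 1)) / 2))
          - 2 * C / ((m:ℝ) + 1) * (B:ℝ) * ((2 * (m:ℝ) - (B:ℝ)) * (1 / (3 * (m:ℝ)))))
        = C * ((2 * (m:ℝ) - (B:ℝ)) * (3 * (B:ℝ) - (m:ℝ) + 2))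
          / (9 * (m:ℝ) * ((m:ℝ) + 1)) := by
      field_simp
      ring
    linarith [heq, hP]
end

section
/- Let C > 0, k = C/2, v = (5/3)·C, p_1 = 2/3, p_2 = 1/3, m = 5, and let the CASH distribution be q_1 = 9/16, q_2 = q_3 = q_4 = 1/8, q_5 = 1/16. Then: (a) k·Σ_{t=1}^{5} t·q_t = C, so the server's amortized authentication cost (with α = 1) meets the budget C_max = C exactly; (b) letting π_1 ≥ π_2 ≥ … ≥ π_{10} be the non-increasing arrangement of the ten products p_i·q_j and U(B) = v·Σ_{i=1}^B π_i − k·Σ_{i=1}^B i·π_i − k·B·Σ_{i=B+1}^{10} π_i, the threshold B = 2 maximizes utility, i.e., U(2) ≥ U(B) for all B ∈ {0,…,10}; and (c) the corresponding cracked fraction is Σ_{i=1}^{2} π_i = (p_1 + p_2)·q_1 = 9/16 < 1. -/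
/-!
A non-increasing rearrangement of a finite tuple is unique, so `π` must be the explicit list
`3/8, 3/16, 1/12, 1/12, 1/12, 1/24, 1/24, 1/24, 1/24, 1/48` of the products `p i * q t`.
The utility is homogeneous in `(v, k)`, hence equal to `C` times the utility for `v = 5/3`,
`k = 1/2`, whose values at `B = 0, …, 10` are the rationals
`0, 1/8, 1/8, 13/288, 1/144, 1/96, -1/72, -5/288, 0, 11/288, 1/16`; the maximum `1/8` is
attained at `B = 2`.
-/

open Finset

theorem unique_antitone_comp_equiv {ι α : Type*} [PartialOrder α] {n : ℕ} {f : ι → α}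
    {σ τ : Fin n ≃ ι} (hσ : Antitone (f ∘ σ)) (hτ : Antitone (f ∘ τ)) : f ∘ σ = f ∘ τ := by
  have key := Tuple.unique_antitone (f := f ∘ τ) (σ := σ.trans τ.symm) (τ := Equiv.refl _)
    (by simpa [Function.comp_def] using hσ) hτ
  simpa [Function.comp_def] using key

noncomputable def adversaryUtility (v k : ℝ) (π : ℕ → ℝ) (n B : ℕ) : ℝ :=
  v * ∑ i ∈ Icc 1 B, π i - k * ∑ i ∈ Icc 1 B, (i : ℝ) * π i
    - k * B * ∑ i ∈ Icc (B + 1) n, π i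

theorem adversaryUtility_mul (c v k : ℝ) (π : ℕ → ℝ) (n B : ℕ) :
    adversaryUtility (c * v) (c * k) π n B = c * adversaryUtility v k π n B := by
  unfold adversaryUtility; ring

namespace NonuniformCash

noncomputable def pairProb (x : Fin 2 × Fin 5) : ℝ :=
  ![2 / 3, 1 / 3] x.1 * ![9 / 16, 1 / 8, 1 / 8, 1 / 8, 1 / 16] x.2

def sortingEquiv : Fin 10 ≃ Fin 2 × Fin 5 where
  toFun := ![(0, 0), (1, 0), (0, 1), (0, 2), (0, 3), (1, 1), (1, 2), (1, 3), (0, 4), (1, 4)]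
  invFun x := ![![0, 2, 3, 4, 8], ![1, 5, 6, 7, 9]] x.1 x.2
  left_inv := by decide
  right_inv := by decide

noncomputable def sortedProb : Fin 10 → ℝ :=
  ![3 / 8, 3 / 16, 1 / 12, 1 / 12, 1 / 12, 1 / 24, 1 / 24, 1 / 24, 1 / 24, 1 / 48]

theorem pairProb_comp_sortingEquiv : pairProb ∘ sortingEquiv = sortedProb := by
  funext j
  fin_cases j <;> simp [pairProb, sortingEquiv, sortedProb] <;> norm_num

theorem antitone_sortedProb : Antitone sortedProb := by
  simp [sortedProb]
  norm_num

theorem adversaryUtility_le_two (π : ℕ → ℝ) (hπ : ∀ j : Fin 10, π (j + 1) = sortedProb j)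
    {B : ℕ} (hB : B ≤ 10) :
    adversaryUtility (5 / 3) (1 / 2) π 10 B ≤ adversaryUtility (5 / 3) (1 / 2) π 10 2 := by
  simp only [Fin.forall_fin_succ, IsEmpty.forall_iff, and_true, sortedProb, Matrix.cons_val_zero,
    Matrix.cons_val_succ, Fin.val_succ, Fin.val_zero] at hπ
  obtain ⟨h1, h2, h3, h4, h5, h6, h7, h8, h9, h10⟩ := hπ
  interval_cases B <;>
    norm_num [adversaryUtility, sum_Icc_succ_top, h1, h2, h3, h4, h5, h6, h7, h8, h9, h10]

end NonuniformCash

open NonuniformCash in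
/-- The paper's non-uniform CASH example: with `k = C/2`, `v = (5/3)·C`,
passwords of probabilities `p 1 = 2/3`, `p 2 = 1/3`, `m = 5` salt values with
CASH distribution `q 1 = 9/16`, `q 2 = q 3 = q 4 = 1/8`, `q 5 = 1/16`:
(a) the amortized server cost `k·∑_{t=1}^5 t·q t` equals `C`;
(b) for `π` the non-increasing arrangement (indexed `1,…,10`) of the ten products
`p i·q j` and `U B = v·∑_{i=1}^B π i − k·∑_{i=1}^B i·π i − k·B·∑_{i=B+1}^{10} π i`,
the threshold `B = 2` maximizes utility; and
(c) the cracked fraction is `π 1 + π 2 = (p 1 + p 2)·q 1 = 9/16 < 1`. -/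
theorem example_nonuniform_cash (C : ℝ) (hC : 0 < C)
    (k v : ℝ) (hk : k = C / 2) (hv : v = (5 / 3) * C)
    (p : ℕ → ℝ) (hp1 : p 1 = 2 / 3) (hp2 : p 2 = 1 / 3)
    (q : ℕ → ℝ) (hq1 : q 1 = 9 / 16) (hq2 : q 2 = 1 / 8) (hq3 : q 3 = 1 / 8)
    (hq4 : q 4 = 1 / 8) (hq5 : q 5 = 1 / 16)
    (π : ℕ → ℝ)
    (hπmono : ∀ i i' : ℕ, 1 ≤ i → i ≤ i' → i' ≤ 10 → π i' ≤ π i)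
    (hπperm : ∃ σ : Fin 10 ≃ Fin 2 × Fin 5,
      ∀ j : Fin 10, π ((j : ℕ) + 1) = p ((σ j).1 + 1) * q ((σ j).2 + 1))
    (U : ℕ → ℝ)
    (hU : ∀ B : ℕ, U B =
      v * ∑ i ∈ Finset.Icc 1 B, π i
        - k * ∑ i ∈ Finset.Icc 1 B, (i : ℝ) * π i
        - k * (B : ℝ) * ∑ i ∈ Finset.Icc (B + 1) 10, π i) :
    k * ∑ t ∈ Finset.Icc (1 : ℕ) 5, (t : ℝ) * q t = C ∧
      (∀ B : ℕ, B ≤ 10 → U B ≤ U 2) ∧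
      π 1 + π 2 = (p 1 + p 2) * q 1 ∧
      (p 1 + p 2) * q 1 = 9 / 16 ∧ (9 : ℝ) / 16 < 1 := by
  obtain ⟨σ, hσ⟩ := hπperm
  have hpq : ∀ x : Fin 2 × Fin 5, p (x.1 + 1) * q (x.2 + 1) = pairProb x := by
    rintro ⟨i, t⟩
    fin_cases i <;> fin_cases t <;> simp [pairProb, hp1, hp2, hq1, hq2, hq3, hq4, hq5]
  have hπσ : (fun j : Fin 10 => π (j + 1)) = pairProb ∘ σ := funext fun j => (hσ j).trans (hpq _)
  have hsorted : ∀ j : Fin 10, π (j + 1) = sortedProb j := by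
    have hanti : Antitone (pairProb ∘ σ) := hπσ ▸ fun i j hij =>
      hπmono _ _ (by omega) (by simpa using hij) (by omega)
    have hσ_eq := unique_antitone_comp_equiv hanti
      (pairProb_comp_sortingEquiv ▸ antitone_sortedProb)
    exact congrFun (hπσ.trans (hσ_eq.trans pairProb_comp_sortingEquiv))
  have hutil : ∀ B, U B = C * adversaryUtility (5 / 3) (1 / 2) π 10 B := by
    intro B
    rw [hU, ← adversaryUtility_mul, adversaryUtility, hk, hv]
    ring
  refine ⟨?_, fun B hB => ?_, ?_, ?_, by norm_num⟩
  · norm_num [sum_Icc_succ_top, hq1, hq2, hq3, hq4, hq5, hk]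
  · rw [hutil, hutil]
    exact mul_le_mul_of_nonneg_left (adversaryUtility_le_two π hsorted hB) hC.le
  · rw [show π 1 = 3 / 8 from hsorted 0, show π 2 = 3 / 16 from hsorted 1, hp1, hp2, hq1]
    norm_num
  · rw [hp1, hp2, hq1]
    norm_num
end
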